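/- Let Φ = (A; {E_i}; A*; {E*_i}) be a Leonard system with parameter array ({θ_i}; {θ*_i}; {φ_i}; {ϕ_i}). Then for 0 ≤ i,j ≤ d, E_d τ*_i(A*) η_j(A) E*_0 = δ_{ij} ϕ_1 ϕ_2 ⋯ ϕ_i E_d E*_0. -/

import Mathlib

open Matrix Polynomial

/-- A Leonard system in the matrix algebra `Mat_{d+1}(K)`: multiplicity-free
elements `A`, `Astar` with orderings `E`, `Estar` of their primitive idempotents
satisfying the irreducible-tridiagonality conditions. -/
structure LeonardSystem (K : Type*) [Field K] (d : ℕ) where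
  A : Matrix (Fin (d+1)) (Fin (d+1)) K
  Astar : Matrix (Fin (d+1)) (Fin (d+1)) K
  E : Fin (d+1) → Matrix (Fin (d+1)) (Fin (d+1)) K
  Estar : Fin (d+1) → Matrix (Fin (d+1)) (Fin (d+1)) K
  θ : Fin (d+1) → K
  θs : Fin (d+1) → K
  θ_inj : Function.Injective θ
  θs_inj : Function.Injective θs
  E_ne : ∀ i, E i ≠ 0
  Es_ne : ∀ i, Estar i ≠ 0
  E_mul : ∀ i j, E i * E j = if i = j then E i else 0
  Es_mul : ∀ i j, Estar i * Estar j = if i = j then Estar i else 0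
  E_sum : ∑ i, E i = 1
  Es_sum : ∑ i, Estar i = 1
  A_eq : A = ∑ i, θ i • E i
  As_eq : Astar = ∑ i, θs i • Estar i
  trid0 : ∀ i j : Fin (d+1), ((i : ℤ) - (j : ℤ)).natAbs > 1 → E i * Astar * E j = 0
  trid1 : ∀ i j : Fin (d+1), ((i : ℤ) - (j : ℤ)).natAbs = 1 → E i * Astar * E j ≠ 0
  strid0 : ∀ i j : Fin (d+1), ((i : ℤ) - (j : ℤ)).natAbs > 1 → Estar i * A * Estar j = 0
  strid1 : ∀ i j : Fin (d+1), ((i : ℤ) - (j : ℤ)).natAbs = 1 → Estar i * A * Estar j ≠ 0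

namespace LeonardSystem

variable {K : Type*} [Field K] {d : ℕ}

/-- Eigenvalues indexed by `ℕ` (junk value outside range). -/
def θN (L : LeonardSystem K d) (i : ℕ) : K := if h : i < d + 1 then L.θ ⟨i, h⟩ else 0

def θsN (L : LeonardSystem K d) (i : ℕ) : K := if h : i < d + 1 then L.θs ⟨i, h⟩ else 0

/-- `τ_i(A) = (A-θ₀)(A-θ₁)⋯(A-θ_{i-1})`. -/
def tauA (L : LeonardSystem K d) : ℕ → Matrix (Fin (d+1)) (Fin (d+1)) K
  | 0 => 1
  | i + 1 => L.tauA i * (L.A - L.θN i • 1)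

/-- `η_i(A) = (A-θ_d)(A-θ_{d-1})⋯(A-θ_{d-i+1})`. -/
def etaA (L : LeonardSystem K d) : ℕ → Matrix (Fin (d+1)) (Fin (d+1)) K
  | 0 => 1
  | i + 1 => L.etaA i * (L.A - L.θN (d - i) • 1)

/-- `τ*_i(A*)`. -/
def tausA (L : LeonardSystem K d) : ℕ → Matrix (Fin (d+1)) (Fin (d+1)) K
  | 0 => 1
  | i + 1 => L.tausA i * (L.Astar - L.θsN i • 1)

/-- `η*_i(A*)`. -/
def etasA (L : LeonardSystem K d) : ℕ → Matrix (Fin (d+1)) (Fin (d+1)) K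
  | 0 => 1
  | i + 1 => L.etasA i * (L.Astar - L.θsN (d - i) • 1)

/-- Scalar `τ_i(x)`. -/
def tauS (L : LeonardSystem K d) (i : ℕ) (x : K) : K := ∏ j ∈ Finset.range i, (x - L.θN j)

/-- Scalar `η_i(x)`. -/
def etaS (L : LeonardSystem K d) (i : ℕ) (x : K) : K := ∏ j ∈ Finset.range i, (x - L.θN (d - j))

/-- Scalar `τ*_i(x)`. -/
def tausS (L : LeonardSystem K d) (i : ℕ) (x : K) : K := ∏ j ∈ Finset.range i, (x - L.θsN j)

/-- Scalar `η*_i(x)`. -/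
def etasS (L : LeonardSystem K d) (i : ℕ) (x : K) : K := ∏ j ∈ Finset.range i, (x - L.θsN (d - j))

/-- First split sequence `φ_i`. -/
noncomputable def varphi (L : LeonardSystem K d) (i : ℕ) : K :=
  (L.θsN 0 - L.θsN i) * (L.tauA i * L.Estar 0).trace / (L.tauA (i-1) * L.Estar 0).trace

/-- Second split sequence `ϕ_i`. -/
noncomputable def phi (L : LeonardSystem K d) (i : ℕ) : K :=
  (L.θsN 0 - L.θsN i) * (L.etaA i * L.Estar 0).trace / (L.etaA (i-1) * L.Estar 0).trace

/-- `φ₁φ₂⋯φ_r`. -/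
noncomputable def varphiProd (L : LeonardSystem K d) (r : ℕ) : K :=
  ∏ j ∈ Finset.range r, L.varphi (j + 1)

/-- `ϕ₁ϕ₂⋯ϕ_r`. -/
noncomputable def phiProd (L : LeonardSystem K d) (r : ℕ) : K :=
  ∏ j ∈ Finset.range r, L.phi (j + 1)

/-- `φ_d φ_{d-1} ⋯ φ_{d-r+1}`. -/
noncomputable def varphiRevProd (L : LeonardSystem K d) (r : ℕ) : K :=
  ∏ j ∈ Finset.range r, L.varphi (d - j)

/-- `ϕ_d ϕ_{d-1} ⋯ ϕ_{d-r+1}`. -/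
noncomputable def phiRevProd (L : LeonardSystem K d) (r : ℕ) : K :=
  ∏ j ∈ Finset.range r, L.phi (d - j)

end LeonardSystem

/-!
Write `w_j = η_j(A) E*_0`. Since `η_j(A)` kills `E_r` for `r > d - j` and `A` moves the
`E*`-index by at most one, the columns of `w_j` lie in `E_0V + ⋯ + E_{d-j}V` and in
`E*_0V + ⋯ + E*_jV`. Because each `E_r` has rank one and `E_{r+1} A* E_r ≠ 0`, a matrix whose
columns lie in `E*_1V + ⋯ + E*_jV` and in `E_0V + ⋯ + E_{d-j}V` vanishes. Both sides of the
split relation `(A* - θ*_{j+1}) w_{j+1} = ϕ_{j+1} w_j` satisfy these support conditions, and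
their `E*_0`-components agree by the definition of `ϕ_{j+1}`, since
`E*_0 M E*_0 = tr(M E*_0) E*_0`. Applying `E_d τ*_i(A*)` to the split relation and inducting on
`i` gives the diagonal case. For `i < j` the `E`-support of `τ*_i(A*) w_j` stays below
`d - j + i < d`, and for `i > j` the factor `τ*_i(A*)` annihilates `w_j` outright.
-/

open Finset Lagrange

namespace Matrix

variable {K n : Type*} [Field K] [Fintype n]

theorem vecMulVec_mul_mul_vecMulVec (p q : n → K) (M : Matrix n n K) :
    vecMulVec p q * M * vecMulVec p q = trace (M * vecMulVec p q) • vecMulVec p q := by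
  rw [vecMulVec_mul, vecMulVec_mul_vecMulVec, mul_vecMulVec, trace_vecMulVec, vecMulVec_smul,
    dotProduct_comm (M *ᵥ p), dotProduct_mulVec, dotProduct_comm]

theorem mul_vecMulVec_mul_ne_zero {p q : n → K} {N Y : Matrix n n K}
    (hN : N * vecMulVec p q ≠ 0) (hY : vecMulVec p q * Y ≠ 0) :
    N * vecMulVec p q * Y ≠ 0 := by
  rw [mul_vecMulVec] at hN ⊢
  rw [vecMulVec_mul] at hY ⊢
  exact vecMulVec_ne_zero (fun h => hN (by rw [h, zero_vecMulVec]))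
    (fun h => hY (by rw [h, vecMulVec_zero]))

end Matrix

theorem CompleteOrthogonalIdempotents.exists_eq_vecMulVec {K ι n : Type*} [Field K]
    [Fintype ι] [Fintype n] [DecidableEq ι] [DecidableEq n] {E : ι → Matrix n n K}
    (hE : CompleteOrthogonalIdempotents E) (hne : ∀ i, E i ≠ 0)
    (hcard : Fintype.card ι = Fintype.card n) (i : ι) :
    ∃ p q : n → K, E i = vecMulVec p q := by
  -- Nonzero vectors `e j` in the ranges of the `E j` form a basis, on which `E i` is the
  -- coordinate projection onto `e i`.
  have hx : ∀ j, ∃ x, E j *ᵥ x ≠ 0 := fun j => by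
    by_contra! h
    exact hne j (Matrix.toLin'.injective (LinearMap.ext fun x => by simpa using h x))
  choose x hx using hx
  set e := fun j => E j *ᵥ x j
  have hEe : ∀ j k, E j *ᵥ e k = if j = k then e k else 0 := fun j k => by
    simp only [e, mulVec_mulVec, hE.mul_eq]
    split_ifs <;> simp_all
  have hli : LinearIndependent K e := Fintype.linearIndependent_iff.mpr fun g hg j => by
    have := congrArg (E j *ᵥ ·) hg
    simp only [mulVec_sum, mulVec_smul, hEe, smul_ite, smul_zero, sum_ite_eq, mem_univ,
      if_true, mulVec_zero] at this
    exact (smul_eq_zero.mp this).resolve_right (hx j)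
  let b := basisOfLinearIndependentOfCardEqFinrank' e hli (by simpa using hcard)
  have hb : ⇑b = e := coe_basisOfLinearIndependentOfCardEqFinrank' e hli _
  refine ⟨e i, fun c => b.repr (Pi.single c 1) i, Matrix.ext fun a c => ?_⟩
  have hcol := congrArg (E i *ᵥ ·) (b.sum_repr (Pi.single c 1))
  simp only [hb, mulVec_sum, mulVec_smul, hEe, smul_ite, smul_zero, sum_ite_eq, mem_univ,
    if_true, mulVec_single] at hcol
  simpa [vecMulVec_apply, mul_comm] using (congrFun hcol a).symm

namespace Polynomial

variable {K R : Type*} [Field K] [Ring R] [Algebra K R] {a b : R} {c : K}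

theorem aeval_mul_of_mul_eq_smul (h : a * b = c • b) (p : K[X]) :
    aeval a p * b = p.eval c • b := by
  induction p using Polynomial.induction_on' with
  | add p q hp hq => simp [add_mul, hp, hq, add_smul]
  | monomial k e =>
    simp only [aeval_monomial, eval_monomial, Algebra.algebraMap_eq_smul_one, smul_mul_assoc,
      one_mul, mul_smul]
    congr 1
    induction k with
    | zero => simp
    | succ k ih => rw [pow_succ, mul_assoc, h, mul_smul_comm, ih, smul_smul, pow_succ, mul_comm]

theorem mul_aeval_of_mul_eq_smul (h : b * a = c • b) (p : K[X]) :
    b * aeval a p = p.eval c • b := by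
  induction p using Polynomial.induction_on' with
  | add p q hp hq => simp [mul_add, hp, hq, add_smul]
  | monomial k e =>
    simp only [aeval_monomial, eval_monomial, Algebra.algebraMap_eq_smul_one, smul_mul_assoc,
      one_mul, mul_smul_comm, mul_smul]
    congr 1
    induction k with
    | zero => simp
    | succ k ih => rw [pow_succ', ← mul_assoc, h, smul_mul_assoc, ih, smul_smul, pow_succ']

end Polynomial

namespace LeonardSystem

variable {K : Type*} [Field K] {d : ℕ} (L : LeonardSystem K d)

@[simps]
def dual : LeonardSystem K d where
  A := L.Astar
  Astar := L.A
  E := L.Estar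
  Estar := L.E
  θ := L.θs
  θs := L.θ
  θ_inj := L.θs_inj
  θs_inj := L.θ_inj
  E_ne := L.Es_ne
  Es_ne := L.E_ne
  E_mul := L.Es_mul
  Es_mul := L.E_mul
  E_sum := L.Es_sum
  Es_sum := L.E_sum
  A_eq := L.As_eq
  As_eq := L.A_eq
  trid0 := L.strid0
  trid1 := L.strid1
  strid0 := L.trid0
  strid1 := L.trid1

theorem θN_val (r : Fin (d+1)) : L.θN r = L.θ r := dif_pos r.isLt

theorem θsN_val (h : Fin (d+1)) : L.θsN h = L.θs h := dif_pos h.isLt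

theorem completeOrthogonalIdempotents_E : CompleteOrthogonalIdempotents L.E :=
  ⟨OrthogonalIdempotents.iff_mul_eq.mpr L.E_mul, L.E_sum⟩

theorem exists_E_eq_vecMulVec (r : Fin (d+1)) : ∃ p q : Fin (d+1) → K, L.E r = vecMulVec p q :=
  L.completeOrthogonalIdempotents_E.exists_eq_vecMulVec L.E_ne rfl r

theorem E_mul_self (r : Fin (d+1)) : L.E r * L.E r = L.E r := by
  simpa using L.E_mul r r

theorem E_mul_E_of_ne {r s : Fin (d+1)} (h : r ≠ s) : L.E r * L.E s = 0 := by
  simpa [h] using L.E_mul r s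

theorem sum_E_mul (Y : Matrix (Fin (d+1)) (Fin (d+1)) K) : ∑ r, L.E r * Y = Y := by
  rw [← Finset.sum_mul, L.E_sum, one_mul]

theorem sum_mul_E_mul (M Y : Matrix (Fin (d+1)) (Fin (d+1)) K) :
    ∑ t, M * L.E t * Y = M * Y := by
  simp_rw [mul_assoc, ← Finset.mul_sum, L.sum_E_mul]

theorem A_mul_E (r : Fin (d+1)) : L.A * L.E r = L.θ r • L.E r := by
  rw [L.A_eq, Finset.sum_mul, Finset.sum_eq_single r]
  · rw [smul_mul_assoc, L.E_mul_self]
  · intro s _ hs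
    rw [smul_mul_assoc, L.E_mul_E_of_ne hs, smul_zero]
  · simp

theorem E_mul_A (r : Fin (d+1)) : L.E r * L.A = L.θ r • L.E r := by
  rw [L.A_eq, Finset.mul_sum, Finset.sum_eq_single r]
  · rw [mul_smul_comm, L.E_mul_self]
  · intro s _ hs
    rw [mul_smul_comm, L.E_mul_E_of_ne hs.symm, smul_zero]
  · simp

theorem aeval_A_mul_E (p : K[X]) (r : Fin (d+1)) :
    aeval L.A p * L.E r = p.eval (L.θ r) • L.E r :=
  aeval_mul_of_mul_eq_smul (L.A_mul_E r) p

theorem E_mul_aeval_A (p : K[X]) (r : Fin (d+1)) :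
    L.E r * aeval L.A p = p.eval (L.θ r) • L.E r :=
  mul_aeval_of_mul_eq_smul (L.E_mul_A r) p

theorem aeval_A_mul_eq_zero {p : K[X]} {Y : Matrix (Fin (d+1)) (Fin (d+1)) K}
    (hY : ∀ r, p.eval (L.θ r) ≠ 0 → L.E r * Y = 0) : aeval L.A p * Y = 0 := by
  rw [← L.sum_E_mul Y, Finset.mul_sum]
  refine Finset.sum_eq_zero fun r _ => ?_
  rw [← mul_assoc, L.aeval_A_mul_E, smul_mul_assoc]
  by_cases h : p.eval (L.θ r) = 0
  · rw [h, zero_smul]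
  · rw [hY r h, smul_zero]

theorem E_mul_Astar_pow_mul_E_eq_zero {k : ℕ} {r s : Fin (d+1)} (h : (r : ℕ) + k < s) :
    L.E s * L.Astar ^ k * L.E r = 0 := by
  induction k generalizing r with
  | zero => rw [pow_zero, mul_one, L.E_mul_E_of_ne (Fin.ne_of_val_ne (by omega))]
  | succ k ih =>
    rw [pow_succ, ← mul_assoc, mul_assoc, ← L.sum_mul_E_mul]
    refine Finset.sum_eq_zero fun t _ => ?_
    rcases le_or_gt (t : ℕ) (r + 1) with ht | ht
    · rw [ih (by omega), zero_mul]
    · rw [mul_assoc, ← mul_assoc (L.E t), L.trid0 t r (by omega), mul_zero]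

theorem E_mul_aeval_Astar_mul_E_eq_zero {p : K[X]} {r s : Fin (d+1)}
    (h : (r : ℕ) + p.natDegree < s) : L.E s * aeval L.Astar p * L.E r = 0 := by
  rw [aeval_eq_sum_range, Finset.mul_sum, Finset.sum_mul]
  refine Finset.sum_eq_zero fun k hk => ?_
  rw [mul_smul_comm, smul_mul_assoc,
    L.E_mul_Astar_pow_mul_E_eq_zero (by rw [Finset.mem_range] at hk; omega), smul_zero]

theorem E_mul_aeval_Astar_mul_E_of_monic {p : K[X]} (hp : p.Monic) {r s : Fin (d+1)}
    (h : (s : ℕ) = r + p.natDegree) :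
    L.E s * aeval L.Astar p * L.E r = L.E s * L.Astar ^ p.natDegree * L.E r := by
  rw [aeval_eq_sum_range, Finset.sum_range_succ, mul_add, add_mul, Finset.mul_sum,
    Finset.sum_mul, Finset.sum_eq_zero, zero_add, coeff_natDegree, hp.leadingCoeff, one_smul]
  intro k hk
  rw [mul_smul_comm, smul_mul_assoc,
    L.E_mul_Astar_pow_mul_E_eq_zero (by rw [Finset.mem_range] at hk; omega), smul_zero]

theorem E_mul_Astar_pow_mul_E_mul_ne_zero {k : ℕ} {r s : Fin (d+1)} (h : (s : ℕ) = r + k)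
    {Y : Matrix (Fin (d+1)) (Fin (d+1)) K} (hY : L.E r * Y ≠ 0) :
    L.E s * L.Astar ^ k * L.E r * Y ≠ 0 := by
  induction k generalizing s with
  | zero => rwa [pow_zero, mul_one, Fin.ext h, L.E_mul_self]
  | succ k ih =>
    let t : Fin (d+1) := ⟨r + k, by omega⟩
    have ht : (t : ℕ) = r + k := rfl
    have hcollapse : L.E s * L.Astar ^ (k+1) * L.E r * Y
        = L.E s * L.Astar * L.E t * (L.Astar ^ k * L.E r * Y) := by
      calc L.E s * L.Astar ^ (k+1) * L.E r * Y
          = L.E s * L.Astar * (L.Astar ^ k * L.E r * Y) := by simp only [pow_succ', mul_assoc]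
        _ = ∑ u, L.E s * L.Astar * L.E u * (L.Astar ^ k * L.E r * Y) := (L.sum_mul_E_mul _ _).symm
        _ = _ := Finset.sum_eq_single t (fun u _ hu => ?_) (by simp)
      rcases lt_or_gt_of_ne (Fin.val_ne_of_ne hu) with hu | hu
      · rw [L.trid0 s u (by omega), zero_mul]
      · calc L.E s * L.Astar * L.E u * (L.Astar ^ k * L.E r * Y)
            = L.E s * L.Astar * (L.E u * L.Astar ^ k * L.E r) * Y := by simp only [mul_assoc]
          _ = 0 := by rw [L.E_mul_Astar_pow_mul_E_eq_zero (by omega), mul_zero, zero_mul]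
    have hN : L.E s * L.Astar * L.E t ≠ 0 := L.trid1 s t (by omega)
    have hY' : L.E t * (L.Astar ^ k * L.E r * Y) ≠ 0 := by
      simpa only [mul_assoc] using ih (s := t) rfl
    -- `E_t` has rank one, so `E_s A* E_t ≠ 0` cannot kill the nonzero `E_t`-component.
    obtain ⟨p, q, hpq⟩ := L.exists_E_eq_vecMulVec t
    rw [hcollapse]
    rw [hpq] at hN hY' ⊢
    exact mul_vecMulVec_mul_ne_zero hN hY'

/-- The columns of `Y` lie in `E_0V + ⋯ + E_nV`. -/
def EVanishesAbove (n : ℕ) (Y : Matrix (Fin (d+1)) (Fin (d+1)) K) : Prop :=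
  ∀ r : Fin (d+1), n < r → L.E r * Y = 0

theorem EVanishesAbove_E (r : Fin (d+1)) : L.EVanishesAbove r (L.E r) :=
  fun _ h => L.E_mul_E_of_ne (Fin.ne_of_gt h)

variable {L} in
theorem EVanishesAbove.aeval_Astar_mul {n : ℕ} {Y : Matrix (Fin (d+1)) (Fin (d+1)) K}
    (hY : L.EVanishesAbove n Y) (p : K[X]) :
    L.EVanishesAbove (n + p.natDegree) (aeval L.Astar p * Y) := by
  intro s hs
  rw [← mul_assoc, ← L.sum_mul_E_mul]
  refine Finset.sum_eq_zero fun t _ => ?_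
  rcases le_or_gt (t : ℕ) n with ht | ht
  · rw [L.E_mul_aeval_Astar_mul_E_eq_zero (by omega), zero_mul]
  · rw [mul_assoc, hY t ht, mul_zero]

theorem etaA_eq_aeval (j : ℕ) :
    L.etaA j = aeval L.A (nodal (range j) fun t => L.θN (d - t)) := by
  induction j with
  | zero => simp [etaA, nodal]
  | succ j ih => simp [etaA, ih, nodal, prod_range_succ, Algebra.algebraMap_eq_smul_one]

theorem tausA_eq_aeval (i : ℕ) : L.tausA i = aeval L.Astar (nodal (range i) L.θsN) := by
  induction i with
  | zero => simp [tausA, nodal]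
  | succ i ih => simp [tausA, ih, nodal, prod_range_succ, Algebra.algebraMap_eq_smul_one]

theorem E_mul_etaA_eq_zero {j : ℕ} {r : Fin (d+1)} (h : d < r + j) : L.E r * L.etaA j = 0 := by
  have hnode : L.θ r = L.θN (d - (d - r)) := by rw [Nat.sub_sub_self r.is_le, θN_val]
  rw [etaA_eq_aeval, E_mul_aeval_A, hnode,
    eval_nodal_at_node (v := fun t => L.θN (d - t)) (mem_range.mpr (by omega)), zero_smul]

theorem EVanishesAbove_etaA_mul (j : ℕ) (Y : Matrix (Fin (d+1)) (Fin (d+1)) K) :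
    L.EVanishesAbove (d - j) (L.etaA j * Y) := fun r hr => by
  rw [← mul_assoc, L.E_mul_etaA_eq_zero (by omega), zero_mul]

theorem dual_EVanishesAbove_etaA_mul_Estar_zero (j : ℕ) :
    L.dual.EVanishesAbove j (L.etaA j * L.Estar 0) := by
  simpa [etaA_eq_aeval, natDegree_nodal] using
    (L.dual.EVanishesAbove_E 0).aeval_Astar_mul (nodal (range j) fun t => L.θN (d - t))

theorem etaA_mul_Estar_zero_ne_zero {j : ℕ} (hj : j ≤ d) : L.etaA j * L.Estar 0 ≠ 0 := by
  let p := nodal (range j) fun t => L.θN (d - t)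
  have hdeg : p.natDegree = j := by simp [p, natDegree_nodal]
  have hchain := L.dual.E_mul_Astar_pow_mul_E_mul_ne_zero (k := j) (r := 0) (s := ⟨j, by omega⟩)
    (by simp) (Y := 1) (by simpa using L.Es_ne 0)
  have hleading := L.dual.E_mul_aeval_Astar_mul_E_of_monic (p := p) nodal_monic (r := 0)
    (s := ⟨j, by omega⟩) (by simp [hdeg])
  rw [hdeg] at hleading
  rw [mul_one, ← hleading] at hchain
  simp only [dual_E, dual_Astar, p, ← etaA_eq_aeval] at hchain
  intro h
  rw [mul_assoc, h, mul_zero] at hchain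
  exact hchain rfl

theorem eq_zero_of_vanishesAbove {i : ℕ} (hi : i ≤ d) {Y : Matrix (Fin (d+1)) (Fin (d+1)) K}
    (h0 : L.Estar 0 * Y = 0) (hEs : L.dual.EVanishesAbove i Y) (hE : L.EVanishesAbove (d - i) Y) :
    Y = 0 := by
  -- `∏_{h=1}^{i} (A* - θ*_h)` kills `Y`. Downward induction on `r`: once `E_s Y = 0` for `s > r`,
  -- the `E_{r+i}`-component of that product times `Y` is `E_{r+i} A*^i E_r Y`.
  let p := nodal (Icc 1 i) L.θsN
  have hdeg : p.natDegree = i := by simp [p, natDegree_nodal]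
  have hkill : aeval L.Astar p * Y = 0 := L.dual.aeval_A_mul_eq_zero fun h hh => by
    rcases Nat.eq_zero_or_pos h with h0' | hpos
    · rwa [show h = 0 from Fin.ext h0']
    refine hEs h (not_le.mp fun hhi => hh ?_)
    rw [show L.dual.θ h = L.θsN h from (L.θsN_val h).symm]
    exact eval_nodal_at_node (mem_Icc.mpr ⟨hpos, hhi⟩)
  have hEY : ∀ r, L.E r * Y = 0 := fun r => by
    induction r using WellFoundedGT.induction with
    | _ r ih =>
    by_contra hr
    have hri : (r : ℕ) + i ≤ d := by
      by_contra hri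
      exact hr (hE r (by omega))
    let s : Fin (d+1) := ⟨r + i, by omega⟩
    have hcollapse : L.E s * (aeval L.Astar p * Y) = L.E s * L.Astar ^ i * L.E r * Y := by
      rw [← mul_assoc, ← L.sum_mul_E_mul, Finset.sum_eq_single r]
      · rw [L.E_mul_aeval_Astar_mul_E_of_monic nodal_monic (by simp [s]), hdeg]
      · intro t _ ht
        rcases lt_or_gt_of_ne ht with ht | ht
        · rw [L.E_mul_aeval_Astar_mul_E_eq_zero (by simp only [s, hdeg]; omega), zero_mul]
        · rw [mul_assoc, ih t ht, mul_zero]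
      · simp
    exact L.E_mul_Astar_pow_mul_E_mul_ne_zero rfl hr (by rw [← hcollapse, hkill, mul_zero])
  rw [← L.sum_E_mul Y]
  exact Finset.sum_eq_zero fun r _ => hEY r

theorem Estar_mul_Astar_sub_smul (h : Fin (d+1)) (c : K) :
    L.Estar h * (L.Astar - c • 1) = (L.θs h - c) • L.Estar h := by
  rw [mul_sub, mul_smul_comm, mul_one, sub_smul]
  exact congrArg (· - _) (L.dual.E_mul_A h)

theorem Estar_mul_mul_Estar_eq_trace_smul (h : Fin (d+1))
    (M : Matrix (Fin (d+1)) (Fin (d+1)) K) :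
    L.Estar h * (M * L.Estar h) = trace (M * L.Estar h) • L.Estar h := by
  obtain ⟨p, q, hpq⟩ : ∃ p q, L.Estar h = vecMulVec p q := L.dual.exists_E_eq_vecMulVec h
  rw [← mul_assoc, hpq, vecMulVec_mul_mul_vecMulVec]

theorem trace_etaA_mul_Estar_zero_ne_zero {j : ℕ} (hj : j ≤ d) :
    trace (L.etaA j * L.Estar 0) ≠ 0 := fun h =>
  L.etaA_mul_Estar_zero_ne_zero hj <| L.eq_zero_of_vanishesAbove hj
    (by rw [Estar_mul_mul_Estar_eq_trace_smul, h, zero_smul])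
    (L.dual_EVanishesAbove_etaA_mul_Estar_zero j) (L.EVanishesAbove_etaA_mul j _)

theorem Astar_sub_smul_mul_etaA_mul_Estar_zero {j : ℕ} (hj : j + 1 ≤ d) :
    (L.Astar - L.θsN (j+1) • 1) * (L.etaA (j+1) * L.Estar 0) =
      L.phi (j+1) • (L.etaA j * L.Estar 0) := by
  rw [← sub_eq_zero]
  refine L.eq_zero_of_vanishesAbove (i := j) (by omega) ?_ ?_ ?_
  · rw [mul_sub, ← mul_assoc, Estar_mul_Astar_sub_smul, smul_mul_assoc,
      Estar_mul_mul_Estar_eq_trace_smul, mul_smul_comm, Estar_mul_mul_Estar_eq_trace_smul,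
      smul_smul, smul_smul, ← sub_smul, phi, Nat.add_sub_cancel,
      div_mul_cancel₀ _ (L.trace_etaA_mul_Estar_zero_ne_zero (by omega)), ← θsN_val,
      Fin.val_zero, sub_self, zero_smul]
  · have hw := L.dual_EVanishesAbove_etaA_mul_Estar_zero
    simp only [EVanishesAbove, dual_E] at hw ⊢
    intro h hh
    rw [mul_sub, mul_smul_comm, hw j h hh, smul_zero, sub_zero, ← mul_assoc,
      Estar_mul_Astar_sub_smul, smul_mul_assoc]
    rcases (show (h : ℕ) = j + 1 ∨ j + 1 < h by omega) with he | hlt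
    · rw [← he, θsN_val, sub_self, zero_smul]
    · rw [hw (j+1) h hlt, smul_zero]
  · have hy := (L.EVanishesAbove_etaA_mul (j+1) (L.Estar 0)).aeval_Astar_mul
      (X - C (L.θsN (j+1)))
    intro r hr
    rw [mul_sub, mul_smul_comm, L.EVanishesAbove_etaA_mul j _ r hr, smul_zero, sub_zero]
    simpa [Algebra.algebraMap_eq_smul_one] using hy r (by rw [natDegree_X_sub_C]; omega)

theorem E_last_mul_tausA_mul_etaA_mul_Estar_zero_of_lt {i j : ℕ} (hij : i < j) (hj : j ≤ d) :
    L.E (Fin.last d) * L.tausA i * (L.etaA j * L.Estar 0) = 0 := by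
  rw [mul_assoc, tausA_eq_aeval]
  exact (L.EVanishesAbove_etaA_mul j _).aeval_Astar_mul _ (Fin.last d)
    (by simp [natDegree_nodal]; omega)

theorem tausA_mul_etaA_mul_Estar_zero_of_lt {i j : ℕ} (hji : j < i) :
    L.tausA i * (L.etaA j * L.Estar 0) = 0 := by
  rw [tausA_eq_aeval]
  refine L.dual.aeval_A_mul_eq_zero fun h hh => L.dual_EVanishesAbove_etaA_mul_Estar_zero j h ?_
  by_contra hhj
  rw [show L.dual.θ h = L.θsN h from (L.θsN_val h).symm] at hh
  exact hh (eval_nodal_at_node (mem_range.mpr (by omega)))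

theorem E_last_mul_tausA_mul_etaA_mul_Estar_zero_self {i : ℕ} (hi : i ≤ d) :
    L.E (Fin.last d) * L.tausA i * (L.etaA i * L.Estar 0) =
      L.phiProd i • (L.E (Fin.last d) * L.Estar 0) := by
  induction i with
  | zero => simp [tausA, etaA, phiProd]
  | succ i ih =>
    calc L.E (Fin.last d) * L.tausA (i+1) * (L.etaA (i+1) * L.Estar 0)
        = L.E (Fin.last d) * L.tausA i *
            ((L.Astar - L.θsN (i+1) • 1) * (L.etaA (i+1) * L.Estar 0)) +
          (L.θsN (i+1) - L.θsN i) •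
            (L.E (Fin.last d) * L.tausA i * (L.etaA (i+1) * L.Estar 0)) := by
          rw [tausA, show L.Astar - L.θsN i • 1 =
            (L.Astar - L.θsN (i+1) • 1) + (L.θsN (i+1) - L.θsN i) • 1 by module]
          noncomm_ring
      _ = L.phiProd (i+1) • (L.E (Fin.last d) * L.Estar 0) := by
        rw [L.Astar_sub_smul_mul_etaA_mul_Estar_zero hi,
          L.E_last_mul_tausA_mul_etaA_mul_Estar_zero_of_lt (Nat.lt_succ_self i) hi, smul_zero,
          add_zero, mul_smul_comm, ih (by omega), smul_smul, phiProd, phiProd, prod_range_succ,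
          mul_comm]

end LeonardSystem

/-- `E_d τ*_i(A*) η_j(A) E*_0 = δ_{ij} ϕ_1⋯ϕ_i E_d E*_0`. -/
theorem LeonardSystem.reduction_eta {K : Type*} [Field K] {d : ℕ}
    (L : LeonardSystem K d) :
    ∀ i j : Fin (d+1),
      L.E (Fin.last d) * L.tausA (i : ℕ) * L.etaA (j : ℕ) * L.Estar 0 =
        if i = j then L.phiProd (i : ℕ) • (L.E (Fin.last d) * L.Estar 0) else 0 := by
  intro i j
  rw [mul_assoc _ (L.etaA j)]
  rcases lt_trichotomy i j with hij | rfl | hij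
  · rw [if_neg hij.ne, L.E_last_mul_tausA_mul_etaA_mul_Estar_zero_of_lt hij j.is_le]
  · rw [if_pos rfl, L.E_last_mul_tausA_mul_etaA_mul_Estar_zero_self i.is_le]
  · rw [if_neg hij.ne', mul_assoc, L.tausA_mul_etaA_mul_Estar_zero_of_lt hij, mul_zero]
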